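/- Let q be an odd prime power and let a, b, c ∈ F_q with abc ≠ 0 and ab ≠ c², and let μ ∈ F_q be a nonsquare. Then the homogeneous quartic polynomial F(X,Y,Z) = cX²Z² − bZ⁴ − μY²(aX² − cZ²) is absolutely irreducible, i.e., irreducible as a polynomial over the algebraic closure of F_q. -/

import Mathlib

/-
Over `K[X, Z]`, a unique factorization domain, `F = B - A Y²` with `A = μ(aX² - cZ²)` and
`B = Z²(cX² - bZ²)`. Two polynomial combinations of `A` and `B` are nonzero constant multiples
of `X⁴` and `Z⁴`, so `A` and `B` have no common factor and `F` is primitive in `Y`. By Gauss's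
lemma `F` is then irreducible as soon as it has no root in `K(X, Z)`, and since `K[X, Z]` is
integrally closed such a root would make `AB` a square in `K[X, Z]`. Specialising `Z = 1` turns
`AB` into `μ(aX² - c)(cX² - b)`, which is separable (a product of two coprime separable
quadratics, as `char K ≠ 2` and `ab ≠ c²`), hence squarefree and not a square.
-/

noncomputable section

open MvPolynomial

/-- The quartic curve `F(X,Y,Z) = cX²Z² − bZ⁴ − μY²(aX² − cZ²)`. -/
def quarticF {K : Type*} [Field K] (a b c μ : K) : MvPolynomial (Fin 3) K :=
  C c * X 0 ^ 2 * X 2 ^ 2 - C b * X 2 ^ 4 - C μ * X 1 ^ 2 * (C a * X 0 ^ 2 - C c * X 2 ^ 2)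

theorem Squarefree.isUnit_of_isSquare {M : Type*} [Monoid M] {x : M} (hx : Squarefree x)
    (hsq : IsSquare x) : IsUnit x := by
  obtain ⟨r, rfl⟩ := hsq
  exact (hx r dvd_rfl).mul (hx r dvd_rfl)

theorem IsIntegrallyClosed.isSquare_of_isSquare_algebraMap {R K : Type*} [CommRing R] [IsDomain R]
    [IsIntegrallyClosed R] [Field K] [Algebra R K] [IsFractionRing R K] {x : R}
    (hx : IsSquare (algebraMap R K x)) : IsSquare x := by
  obtain ⟨w, hw⟩ := hx
  have hint : IsIntegral R w :=
    ⟨Polynomial.X ^ 2 - Polynomial.C x, Polynomial.monic_X_pow_sub_C x two_ne_zero, by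
      simp [hw, sq]⟩
  obtain ⟨d, rfl⟩ := IsIntegrallyClosed.isIntegral_iff.mp hint
  exact ⟨d, IsFractionRing.injective R K (by simpa using hw)⟩

namespace Polynomial

variable {K : Type*} [Field K]

theorem irreducible_C_sub_C_mul_X_sq {a b : K} (ha : a ≠ 0) (hab : ¬ IsSquare (a * b)) :
    Irreducible (C b - C a * X ^ 2) := by
  have hdeg : (C b - C a * X ^ 2).natDegree = 2 := by
    rw [sub_eq_add_neg, natDegree_C_add, natDegree_neg, natDegree_C_mul_X_pow 2 a ha]
  refine irreducible_of_degree_le_three_of_not_isRoot (by simp [hdeg]) fun y hy => hab ?_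
  refine ⟨a * y, ?_⟩
  linear_combination a * (by simpa using hy : b - a * y ^ 2 = 0)

theorem isCoprime_of_mul_add_mul_eq_C {p q u v : K[X]} {k : K} (hk : k ≠ 0)
    (h : u * p + v * q = C k) : IsCoprime p q :=
  ⟨C k⁻¹ * u, C k⁻¹ * v, by
    rw [mul_assoc, mul_assoc, ← mul_add, h, ← C_mul, inv_mul_cancel₀ hk, C_1]⟩

theorem separable_C_mul_X_sq_sub_C {a c : K} (h2 : (2 : K) ≠ 0) (hc : c ≠ 0) :
    (C a * X ^ 2 - C c).Separable := by
  rw [separable_def]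
  refine isCoprime_of_mul_add_mul_eq_C (u := -2) (v := X) (mul_ne_zero h2 hc) ?_
  simp only [derivative_sub, derivative_C_mul_X_pow, derivative_C, Nat.cast_ofNat, C_mul,
    C_ofNat]
  ring

theorem isCoprime_C_mul_X_sq_sub_C {a b c : K} (hab : a * b ≠ c ^ 2) :
    IsCoprime (C a * X ^ 2 - C c) (C c * X ^ 2 - C b) := by
  refine isCoprime_of_mul_add_mul_eq_C (u := C c) (v := - C a) (sub_ne_zero.mpr hab) ?_
  simp only [C_sub, C_mul, C_pow]
  ring

theorem not_isSquare_C_mul_quadratics {a b c μ : K} (h2 : (2 : K) ≠ 0) (ha : a ≠ 0) (hb : b ≠ 0)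
    (hc : c ≠ 0) (hμ : μ ≠ 0) (hab : a * b ≠ c ^ 2) :
    ¬ IsSquare (C μ * ((C a * X ^ 2 - C c) * (C c * X ^ 2 - C b))) := by
  have hsep : (C μ * ((C a * X ^ 2 - C c) * (C c * X ^ 2 - C b))).Separable :=
    .unit_mul (isUnit_C.mpr hμ.isUnit) <| .mul (separable_C_mul_X_sq_sub_C h2 hc)
      (separable_C_mul_X_sq_sub_C h2 hb) (isCoprime_C_mul_X_sq_sub_C hab)
  intro hsq
  have hunit := isUnit_of_dvd_unit (dvd_mul_of_dvd_right (dvd_mul_right _ _) _)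
    (hsep.squarefree.isUnit_of_isSquare hsq)
  have := natDegree_eq_zero_of_isUnit hunit
  rw [natDegree_sub_C, natDegree_C_mul_X_pow 2 a ha] at this
  exact two_ne_zero this

theorem isPrimitive_C_sub_C_mul_X_sq {R : Type*} [CommRing R] {A B : R} (h : IsRelPrime A B) :
    (C B - C A * X ^ 2).IsPrimitive := fun r hr => by
  rw [C_dvd_iff_dvd_coeff] at hr
  refine h ?_ ?_
  · simpa using hr 2
  · simpa using hr 0

theorem irreducible_C_sub_C_mul_X_sq_of_isPrimitive {R : Type*} [CommRing R] [IsDomain R]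
    [UniqueFactorizationMonoid R] {A B : R} (hp : (C B - C A * X ^ 2).IsPrimitive)
    (hAB : ¬ IsSquare (A * B)) : Irreducible (C B - C A * X ^ 2) := by
  let : StrongNormalizationMonoid R := UniqueFactorizationMonoid.strongNormalizationMonoid
  let := UniqueFactorizationMonoid.toNormalizedGCDMonoid R
  rw [hp.irreducible_iff_irreducible_map_fraction_map (K := FractionRing R)]
  simp only [Polynomial.map_sub, Polynomial.map_mul, map_C, Polynomial.map_pow, map_X]
  have hA : A ≠ 0 := by
    rintro rfl
    exact hAB ⟨0, by simp⟩
  refine irreducible_C_sub_C_mul_X_sq (by simpa using hA) fun h => hAB ?_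
  exact IsIntegrallyClosed.isSquare_of_isSquare_algebraMap (K := FractionRing R) (by rwa [map_mul])

end Polynomial

section Quartic

variable {K : Type*} [Field K]

/-- As a polynomial in `Y` over `K[X, Z]` (here `X 0 = X`, `X 1 = Z`),
`quarticF a b c μ = quarticB b c - quarticA a c μ * Y ^ 2`. -/
def quarticA (a c μ : K) : MvPolynomial (Fin 2) K := C μ * (C a * X 0 ^ 2 - C c * X 1 ^ 2)

def quarticB (b c : K) : MvPolynomial (Fin 2) K := X 1 ^ 2 * (C c * X 0 ^ 2 - C b * X 1 ^ 2)

variable (K) in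
def equivPolynomialY : MvPolynomial (Fin 3) K ≃ₐ[K] Polynomial (MvPolynomial (Fin 2) K) :=
  (renameEquiv K (Equiv.swap 0 1)).trans (finSuccEquiv K 2)

theorem equivPolynomialY_quarticF (a b c μ : K) :
    equivPolynomialY K (quarticF a b c μ) =
      Polynomial.C (quarticB b c) - Polynomial.C (quarticA a c μ) * Polynomial.X ^ 2 := by
  have hC (r : K) : equivPolynomialY K (C r) = Polynomial.C (C r) := by
    simp [equivPolynomialY, finSuccEquiv_apply]
  have hX0 : equivPolynomialY K (X 0) = Polynomial.C (X 0) := by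
    simp only [equivPolynomialY, AlgEquiv.trans_apply, renameEquiv_apply, rename_X]
    rw [Equiv.swap_apply_left, show (1 : Fin 3) = Fin.succ 0 from rfl, finSuccEquiv_X_succ]
  have hX1 : equivPolynomialY K (X 1) = Polynomial.X := by
    simp [equivPolynomialY, finSuccEquiv_X_zero]
  have hX2 : equivPolynomialY K (X 2) = Polynomial.C (X 1) := by
    simp only [equivPolynomialY, AlgEquiv.trans_apply, renameEquiv_apply, rename_X]
    rw [Equiv.swap_apply_of_ne_of_ne (by decide) (by decide),
      show (2 : Fin 3) = Fin.succ 1 from rfl, finSuccEquiv_X_succ]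
  simp only [quarticF, quarticA, quarticB, map_sub, map_mul, map_pow, hC, hX0, hX1, hX2]
  ring

theorem isRelPrime_quarticA_quarticB {a b c μ : K} (ha : a ≠ 0) (hμ : μ ≠ 0)
    (hab : a * b ≠ c ^ 2) : IsRelPrime (quarticA a c μ) (quarticB b c) := by
  intro r hrA hrB
  have hZ : r ∣ X 1 ^ 4 := by
    have : X 1 ^ 2 * C c * quarticA a c μ - C μ * C a * quarticB b c =
        C (μ * (a * b - c ^ 2)) * X 1 ^ 4 := by
      simp only [quarticA, quarticB, map_mul, map_sub, map_pow]; ring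
    rw [← ((mul_ne_zero hμ (sub_ne_zero.mpr hab)).isUnit.map C).dvd_mul_left, ← this]
    exact dvd_sub (hrA.mul_left _) (hrB.mul_left _)
  have hX : r ∣ X 0 ^ 4 := by
    have : C (μ * c ^ 2) * quarticB b c + (C (-(b * c)) * X 1 ^ 2 + C (c ^ 2 - a * b) * X 0 ^ 2)
        * quarticA a c μ = C (μ * a * (c ^ 2 - a * b)) * X 0 ^ 4 := by
      simp only [quarticA, quarticB, map_mul, map_sub, map_pow, map_neg]; ring
    rw [← ((mul_ne_zero (mul_ne_zero hμ ha)
      (sub_ne_zero.mpr (Ne.symm hab))).isUnit.map C).dvd_mul_left, ← this]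
    exact dvd_add (hrB.mul_left _) (hrA.mul_left _)
  have hXZ : IsRelPrime (X 0 : MvPolynomial (Fin 2) K) (X 1) :=
    X_prime.irreducible.isRelPrime_iff_not_dvd.mpr (by simp [X_dvd_X])
  exact hXZ.pow hX hZ

theorem not_isSquare_quarticA_mul_quarticB {a b c μ : K} (h2 : (2 : K) ≠ 0) (ha : a ≠ 0)
    (hb : b ≠ 0) (hc : c ≠ 0) (hμ : μ ≠ 0) (hab : a * b ≠ c ^ 2) :
    ¬ IsSquare (quarticA a c μ * quarticB b c) := fun h => by
  have hZ_one : aeval ![Polynomial.X, 1] (quarticA a c μ * quarticB b c) =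
      Polynomial.C μ * ((Polynomial.C a * Polynomial.X ^ 2 - Polynomial.C c) *
        (Polynomial.C c * Polynomial.X ^ 2 - Polynomial.C b)) := by
    simp [quarticA, quarticB]
    ring
  exact Polynomial.not_isSquare_C_mul_quadratics h2 ha hb hc hμ hab (hZ_one ▸ h.map _)

theorem irreducible_quarticF {a b c μ : K} (h2 : (2 : K) ≠ 0) (ha : a ≠ 0) (hb : b ≠ 0)
    (hc : c ≠ 0) (hμ : μ ≠ 0) (hab : a * b ≠ c ^ 2) : Irreducible (quarticF a b c μ) := by
  rw [← MulEquiv.irreducible_iff (equivPolynomialY K).toMulEquiv]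
  show Irreducible (equivPolynomialY K (quarticF a b c μ))
  rw [equivPolynomialY_quarticF]
  exact Polynomial.irreducible_C_sub_C_mul_X_sq_of_isPrimitive
    (Polynomial.isPrimitive_C_sub_C_mul_X_sq (isRelPrime_quarticA_quarticB ha hμ hab))
    (not_isSquare_quarticA_mul_quarticB h2 ha hb hc hμ hab)

theorem map_quarticF {K L : Type*} [Field K] [Field L] (f : K →+* L) (a b c μ : K) :
    MvPolynomial.map f (quarticF a b c μ) = quarticF (f a) (f b) (f c) (f μ) := by
  simp [quarticF]

end Quartic

/-- for `q` odd, `abc ≠ 0`, `ab ≠ c²` and `μ` a nonsquare, the quartic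
`cX²Z² − bZ⁴ − μY²(aX² − cZ²)` is absolutely irreducible. -/
theorem stmt12 (F : Type*) [Field F] [Fintype F] (hodd : Odd (Fintype.card F))
    (a b c μ : F) (habc : a * b * c ≠ 0) (hC : a * b ≠ c ^ 2) (hμ : ¬ IsSquare μ) :
    Irreducible (MvPolynomial.map (algebraMap F (AlgebraicClosure F)) (quarticF a b c μ)) := by
  obtain ⟨⟨ha, hb⟩, hc⟩ : (a ≠ 0 ∧ b ≠ 0) ∧ c ≠ 0 := by
    simpa only [mul_ne_zero_iff] using habc
  have hμ0 : μ ≠ 0 := by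
    rintro rfl
    exact hμ IsSquare.zero
  have h2 : (2 : F) ≠ 0 := Ring.two_ne_zero fun hchar => by
    have := FiniteField.even_card_iff_char_two.mp hchar
    rw [Nat.odd_iff] at hodd
    omega
  set f := algebraMap F (AlgebraicClosure F)
  have hf {x : F} (hx : x ≠ 0) : f x ≠ 0 := (map_ne_zero f).mpr hx
  rw [map_quarticF]
  refine irreducible_quarticF (map_ofNat f 2 ▸ hf h2) (hf ha) (hf hb) (hf hc) (hf hμ0)
    fun h => hC (f.injective ?_)
  simpa using h
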